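/- arXiv:1412.2840 — 3 statements merged into one kernel-verified Lean document; each statement's English description precedes it below -/
import Mathlib

section
/- For every noncommutative polynomial f in finitely many variables over k (an element of the free associative algebra over k), f vanishes under every substitution of right multiplication operators R_{D_1},…,R_{D_m} (with D_1,…,D_m derivations of P_n) if and only if f vanishes under every substitution of n×n matrices over k; that is, the polynomial identities of the right multiplication algebra of the left-symmetric algebra of derivations coincide with the polynomial identities of the matrix algebra M_n(k). -/
/-!
Identify a derivation `E` with the vector `(E xᵢ)ᵢ ∈ Pₙⁿ`. By the chain rule
`E (D xᵢ) = ∑ⱼ ∂ⱼ(D xᵢ) · E xⱼ`, so `R_D` is multiplication by the Jacobian matrix `J(D)`, and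
this matrix action of `Mₙ(Pₙ)` on derivations is faithful. Hence `f(R_{D₁},…,R_{Dₘ}) = 0` iff
`f(J(D₁),…,J(Dₘ)) = 0`. Linear derivations have every constant matrix as Jacobian, which gives one
direction. Conversely, an identity of `Mₙ(k)` holds in `Mₙ(A)` for every commutative `k`-algebra
`A`: since `k` is infinite, it already holds for generic matrices, whose entries are independent
variables, and generic matrices specialise to any matrices over `A`.
-/

open MvPolynomial

/-- `Pn k n` is the polynomial algebra `k[x₁,…,xₙ]`. -/
abbrev Pn (k : Type*) [CommRing k] (n : ℕ) := MvPolynomial (Fin n) k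

/-- `Der k n` is the space of `k`-linear derivations of `Pn k n`. -/
abbrev Der (k : Type*) [CommRing k] (n : ℕ) := Derivation k (Pn k n) (Pn k n)

variable {k : Type*} [Field k] [CharZero k] {n : ℕ}

/-- The left-symmetric product of derivations: `(D · E)(xᵢ) = D (E xᵢ)`. -/
noncomputable def lsMul (D E : Der k n) : Der k n :=
  MvPolynomial.mkDerivation k (fun i => D (E (MvPolynomial.X i)))

/-- The Jacobian matrix of a derivation: `(J D)ᵢⱼ = ∂(D xᵢ)/∂xⱼ`. -/
noncomputable def jac (D : Der k n) : Matrix (Fin n) (Fin n) (Pn k n) :=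
  Matrix.of fun i j => MvPolynomial.pderiv j (D (MvPolynomial.X i))

/-- The divergence of a derivation. -/
noncomputable def divg (D : Der k n) : Pn k n :=
  ∑ i, MvPolynomial.pderiv i (D (MvPolynomial.X i))

/-- Right powers: `rpow D 1 = D`, `rpow D (r+1) = (rpow D r) · D` (for `r ≥ 1`). -/
noncomputable def rpow (D : Der k n) : ℕ → Der k n
  | 0 => D
  | 1 => D
  | (r+2) => lsMul (rpow D (r+1)) D

/-- Left powers: `lpow D 1 = D`, `lpow D (r+1) = D · (lpow D r)` (for `r ≥ 1`). -/
noncomputable def lpow (D : Der k n) : ℕ → Der k n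
  | 0 => D
  | 1 => D
  | (r+2) => lsMul D (lpow D (r+1))

/-- Right multiplication operator `R_D : E ↦ E · D`, as a `k`-linear endomorphism. -/
noncomputable def rmulOp (D : Der k n) : Der k n →ₗ[k] Der k n where
  toFun E := lsMul E D
  map_add' E₁ E₂ := by
    show (MvPolynomial.mkDerivationEquiv k) _ =
      (MvPolynomial.mkDerivationEquiv k) _ + (MvPolynomial.mkDerivationEquiv k) _
    rw [← map_add]
    exact congrArg _ (funext fun i => by simp)
  map_smul' c E := by
    show (MvPolynomial.mkDerivationEquiv k) _ = c • (MvPolynomial.mkDerivationEquiv k) _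
    rw [← map_smul]
    exact congrArg _ (funext fun i => by simp)

/-- Left multiplication operator `L_D : E ↦ D · E`, as a `k`-linear endomorphism. -/
noncomputable def lmulOp (D : Der k n) : Der k n →ₗ[k] Der k n where
  toFun E := lsMul D E
  map_add' E₁ E₂ := by
    show (MvPolynomial.mkDerivationEquiv k) _ =
      (MvPolynomial.mkDerivationEquiv k) _ + (MvPolynomial.mkDerivationEquiv k) _
    rw [← map_add]
    exact congrArg _ (funext fun i => by simp)
  map_smul' c E := by
    show (MvPolynomial.mkDerivationEquiv k) _ = c • (MvPolynomial.mkDerivationEquiv k) _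
    rw [← map_smul]
    exact congrArg _ (funext fun i => by simp)

/-- `Zc F i a` is the coefficient of `t^i` in the image of `a` under `xⱼ ↦ xⱼ + t·fⱼ`. -/
noncomputable def Zc (F : Fin n → Pn k n) (i : ℕ) (a : Pn k n) : Pn k n :=
  (MvPolynomial.aeval
    (fun j => Polynomial.C (MvPolynomial.X j) + Polynomial.C (F j) * Polynomial.X :
      Fin n → Polynomial (Pn k n)) a).coeff i

/-- `PsiOp F m a = Σ (−1)^{k−1} r_k Z_{r₁}(Z_{r₂}(⋯ Z_{r_k}(a)⋯))`, summed over
compositions `(r₁,…,r_k)` of `m`. -/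
noncomputable def PsiOp (F : Fin n → Pn k n) (m : ℕ) (a : Pn k n) : Pn k n :=
  ∑ c : Composition m,
    (-1 : Pn k n) ^ (c.length - 1) * ((c.blocks.getLastD 0 : ℕ) : Pn k n) *
      (c.blocks.foldr (fun r b => Zc F r b) a)

theorem AlgHom.map_freeAlgebraLift {R X A B : Type*} [CommSemiring R] [Semiring A] [Algebra R A]
    [Semiring B] [Algebra R B] (ψ : A →ₐ[R] B) (g : X → A) (f : FreeAlgebra R X) :
    ψ (FreeAlgebra.lift R g f) = FreeAlgebra.lift R (ψ ∘ g) f := by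
  rw [← AlgHom.comp_apply, ← FreeAlgebra.lift_comp_ι (ψ.comp _)]
  simp [Function.comp_def]

section GenericMatrix

variable (R : Type*) [CommRing R] (ι n : Type*) [Fintype n] [DecidableEq n]

noncomputable def genericMatrix (i : ι) : Matrix n n (MvPolynomial (ι × n × n) R) :=
  Matrix.of fun p q => X (i, p, q)

variable {R ι n}

theorem mapMatrix_aeval_lift_genericMatrix {A : Type*} [CommSemiring A] [Algebra R A]
    (v : ι × n × n → A) (f : FreeAlgebra R ι) :
    (aeval v).mapMatrix (FreeAlgebra.lift R (genericMatrix R ι n) f) =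
      FreeAlgebra.lift R (fun i => Matrix.of fun p q => v (i, p, q)) f := by
  rw [AlgHom.map_freeAlgebraLift]
  congr 2
  ext i p q
  simp [genericMatrix]

variable [IsDomain R] [Infinite R] {f : FreeAlgebra R ι}

theorem lift_genericMatrix_eq_zero (hf : ∀ M : ι → Matrix n n R, FreeAlgebra.lift R M f = 0) :
    FreeAlgebra.lift R (genericMatrix R ι n) f = 0 := by
  refine Matrix.ext fun p q => MvPolynomial.funext fun v => ?_
  simpa [hf] using congr($(mapMatrix_aeval_lift_genericMatrix v f) p q)

theorem lift_matrix_eq_zero_of_forall {A : Type*} [CommSemiring A] [Algebra R A]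
    (hf : ∀ M : ι → Matrix n n R, FreeAlgebra.lift R M f = 0) (M : ι → Matrix n n A) :
    FreeAlgebra.lift R M f = 0 := by
  have h := mapMatrix_aeval_lift_genericMatrix (fun t => M t.1 t.2.1 t.2.2) f
  rw [lift_genericMatrix_eq_zero hf, map_zero] at h
  exact h.symm

end GenericMatrix

section MatrixAction

variable (R : Type*) {A m : Type*} [CommSemiring R] [CommSemiring A] [Algebra R A] [Fintype m]
  [DecidableEq m]

noncomputable def Matrix.mulVecAlgHom : Matrix m m A →ₐ[R] Module.End R (m → A) where
  toFun M := M.mulVecLin.restrictScalars R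
  map_one' := by ext; simp
  map_mul' M N := by ext; simp
  map_zero' := by ext; simp
  map_add' M N := by ext; simp
  commutes' r := by ext; simp [Algebra.algebraMap_eq_smul_one]

theorem Matrix.mulVecAlgHom_injective :
    Function.Injective (Matrix.mulVecAlgHom R : Matrix m m A →ₐ[R] Module.End R (m → A)) :=
  (LinearMap.restrictScalars_injective R).comp Matrix.toLin'.injective

end MatrixAction

theorem Derivation.finset_sum_apply {R A M ι : Type*} [CommSemiring R] [CommSemiring A]
    [Algebra R A] [AddCommMonoid M] [Module A M] [Module R M] (s : Finset ι)
    (D : ι → Derivation R A M) (a : A) : (∑ i ∈ s, D i) a = ∑ i ∈ s, D i a := by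
  rw [← Derivation.coeFnAddMonoidHom_apply, map_sum, Finset.sum_apply]
  rfl

namespace MvPolynomial

variable {R σ : Type*} [CommSemiring R] [Fintype σ]

theorem derivation_eq_sum_pderiv (D : Derivation R (MvPolynomial σ R) (MvPolynomial σ R))
    (p : MvPolynomial σ R) : D p = ∑ j, pderiv j p * D (X j) := by
  classical
  have hD : D = ∑ j, D (X j) • (pderiv j : Derivation R (MvPolynomial σ R) _) :=
    derivation_ext fun i => by simp [Derivation.finset_sum_apply, pderiv_X, Pi.single_apply]
  conv_lhs => rw [hD]
  simp [Derivation.finset_sum_apply, mul_comm]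

variable (R σ) [DecidableEq σ]

noncomputable def derivationMatrixAction :
    Matrix σ σ (MvPolynomial σ R) →ₐ[R]
      Module.End R (Derivation R (MvPolynomial σ R) (MvPolynomial σ R)) :=
  ((mkDerivationEquiv R).conjAlgEquiv R).toAlgHom.comp (Matrix.mulVecAlgHom R)

theorem derivationMatrixAction_injective : Function.Injective (derivationMatrixAction R σ) :=
  ((mkDerivationEquiv R).conjAlgEquiv R).injective.comp (Matrix.mulVecAlgHom_injective R)

variable {R σ}

theorem derivationMatrixAction_apply_X (M : Matrix σ σ (MvPolynomial σ R))
    (D : Derivation R (MvPolynomial σ R) (MvPolynomial σ R)) (i : σ) :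
    derivationMatrixAction R σ M D (X i) = ∑ j, M i j * D (X j) := by
  simp [derivationMatrixAction, Matrix.mulVecAlgHom, mkDerivationEquiv, Matrix.mulVec, dotProduct]

variable (σ) in
noncomputable def linearDerivation (M : Matrix σ σ R) :
    Derivation R (MvPolynomial σ R) (MvPolynomial σ R) :=
  mkDerivation R fun i => ∑ j, C (M i j) * X j

theorem pderiv_linearDerivation_X (M : Matrix σ σ R) (i j : σ) :
    pderiv j (linearDerivation σ M (X i)) = C (M i j) := by
  simp [linearDerivation, pderiv_X, Pi.single_apply]

end MvPolynomial

theorem rmulOp_eq_derivationMatrixAction_jac {k : Type*} [Field k] {n : ℕ} (D : Der k n) :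
    rmulOp D = derivationMatrixAction k (Fin n) (jac D) := by
  refine LinearMap.ext fun E => derivation_ext fun i => ?_
  rw [derivationMatrixAction_apply_X]
  exact (mkDerivation_X k _ i).trans (derivation_eq_sum_pderiv E _)

theorem rightMultiplication_identities_eq_matrix_identities_general
    (m : ℕ) (f : FreeAlgebra k (Fin m)) :
    (∀ D : Fin m → Der k n,
        FreeAlgebra.lift k (fun i => (rmulOp (D i) : Module.End k (Der k n))) f = 0) ↔
      (∀ M : Fin m → Matrix (Fin n) (Fin n) k, FreeAlgebra.lift k M f = 0) := by
  have lift_rmulOp (D : Fin m → Der k n) :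
      FreeAlgebra.lift k (fun i => (rmulOp (D i) : Module.End k (Der k n))) f =
        derivationMatrixAction k (Fin n) (FreeAlgebra.lift k (fun i => jac (D i)) f) := by
    simp only [AlgHom.map_freeAlgebraLift, Function.comp_def, rmulOp_eq_derivationMatrixAction_jac]
  constructor
  · intro h M
    have jac_linear (i : Fin m) : jac (linearDerivation (Fin n) (M i)) = (M i).map C :=
      Matrix.ext fun p q => pderiv_linearDerivation_X (M i) p q
    have lift_jac_eq_zero : FreeAlgebra.lift k (fun i => jac (linearDerivation (Fin n) (M i))) f = 0 :=
      derivationMatrixAction_injective k (Fin n) <| by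
        rw [← lift_rmulOp, h, map_zero]
    have lift_map_C : (FreeAlgebra.lift k M f).map C =
        FreeAlgebra.lift k (fun i => (M i).map C) f :=
      AlgHom.map_freeAlgebraLift (Algebra.ofId k (Pn k n)).mapMatrix M f
    simp only [jac_linear, ← lift_map_C] at lift_jac_eq_zero
    exact Matrix.map_injective (C_injective (Fin n) k) (lift_jac_eq_zero.trans (Matrix.map_zero _ C_0).symm)
  · intro h D
    rw [lift_rmulOp, lift_matrix_eq_zero_of_forall h, map_zero]

/-- the polynomial identities of the right multiplication algebra of the
left-symmetric algebra of derivations coincide with those of `Mₙ(k)`. -/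
theorem rightMultiplication_identities_eq_matrix_identities (hn : 1 ≤ n)
    (m : ℕ) (f : FreeAlgebra k (Fin m)) :
    (∀ D : Fin m → Der k n,
        FreeAlgebra.lift k (fun i => (rmulOp (D i) : Module.End k (Der k n))) f = 0) ↔
      (∀ M : Fin m → Matrix (Fin n) (Fin n) k, FreeAlgebra.lift k M f = 0) :=
  rightMultiplication_identities_eq_matrix_identities_general m f
end

section
/- Let f be an element of the free Lie algebra over k on t generators. Then f vanishes under every substitution of derivations of P_n (evaluated in the Lie algebra of derivations of P_n, with bracket the commutator) if and only if f vanishes under every substitution of operators L_{w_1},…,L_{w_t} (with w_1,…,w_t derivations of P_n), evaluated via commutators in the associative algebra of k-linear endomorphisms of the space of derivations of P_n; that is, f is an identity of the Witt algebra W_n if and only if the corresponding left operator identity holds in the left-symmetric algebra of derivations. -/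
open MvPolynomial

variable {k : Type*} [Field k] [CharZero k] {n : ℕ}

attribute [local instance 100] LieRing.ofAssociativeRing

/-!
Since `⁅D, E⁆ xᵢ = D (E xᵢ) - E (D xᵢ)`, the map `D ↦ L_D` is a Lie algebra homomorphism
`Wₙ → End(Wₙ)`. It is injective because the Euler derivation `∑ xᵢ ∂ᵢ` is a right unit for the
left-symmetric product, and an injective Lie homomorphism both preserves and reflects the
vanishing of Lie polynomials.
-/

namespace FreeLieAlgebra

variable {R X L L' : Type*} [CommRing R] [LieRing L] [LieAlgebra R L] [LieRing L']
  [LieAlgebra R L']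

theorem lift_comp (φ : L →ₗ⁅R⁆ L') (w : X → L) : lift R (φ ∘ w) = φ.comp (lift R w) :=
  hom_ext fun x => by simp

theorem lift_comp_eq_zero_iff {φ : L →ₗ⁅R⁆ L'} (hφ : Function.Injective φ) (w : X → L)
    (f : FreeLieAlgebra R X) : lift R (φ ∘ w) f = 0 ↔ lift R w f = 0 := by
  rw [lift_comp, LieHom.comp_apply, map_eq_zero_iff φ hφ]

end FreeLieAlgebra

omit [CharZero k] in
@[simp]
theorem lsMul_apply_X (D E : Der k n) (i : Fin n) : lsMul D E (X i) = D (E (X i)) :=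
  mkDerivation_X k _ i

omit [CharZero k] in
@[simp]
theorem lmulOp_apply (D E : Der k n) : lmulOp D E = lsMul D E := rfl

omit [CharZero k] in
theorem lsMul_lie (D E F : Der k n) :
    lsMul ⁅D, E⁆ F = lsMul D (lsMul E F) - lsMul E (lsMul D F) :=
  derivation_ext fun i => by simp [Derivation.commutator_apply]

noncomputable def eulerDer : Der k n := mkDerivation k X

omit [CharZero k] in
theorem lsMul_eulerDer (D : Der k n) : lsMul D eulerDer = D :=
  derivation_ext fun i => by simp [eulerDer, mkDerivation_X]

noncomputable def lmulLieHom : Der k n →ₗ⁅k⁆ Module.End k (Der k n) where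
  toFun := lmulOp
  map_add' D E := LinearMap.ext fun F => derivation_ext fun i => by simp
  map_smul' c D := LinearMap.ext fun F => derivation_ext fun i => by simp
  map_lie' {D E} := LinearMap.ext fun F => by simp [Ring.lie_def, lsMul_lie]

omit [CharZero k] in
theorem lmulLieHom_injective : Function.Injective (lmulLieHom : Der k n →ₗ⁅k⁆ _) :=
  fun D E h => by simpa [lmulLieHom, lsMul_eulerDer] using LinearMap.congr_fun h eulerDer

theorem witt_identity_iff_left_operator_identity_general
    (t : ℕ) (f : FreeLieAlgebra k (Fin t)) :
    (∀ w : Fin t → Der k n, FreeLieAlgebra.lift k w f = 0) ↔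
      (∀ w : Fin t → Der k n,
        FreeLieAlgebra.lift k (fun i => (lmulOp (w i) : Module.End k (Der k n))) f = 0) :=
  forall_congr' fun w => (FreeLieAlgebra.lift_comp_eq_zero_iff lmulLieHom_injective w f).symm

/-- a free Lie algebra element `f` is an identity of the Witt algebra `Wₙ`
iff the corresponding left operator identity holds in the left-symmetric algebra of
derivations. -/
theorem witt_identity_iff_left_operator_identity (hn : 1 ≤ n)
    (t : ℕ) (f : FreeLieAlgebra k (Fin t)) :
    (∀ w : Fin t → Der k n, FreeLieAlgebra.lift k w f = 0) ↔
      (∀ w : Fin t → Der k n,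
        FreeLieAlgebra.lift k (fun i => (lmulOp (w i) : Module.End k (Der k n))) f = 0) :=
  witt_identity_iff_left_operator_identity_general t f
end

section
/- Fix an n-tuple F = (f_1,…,f_n) of elements of P_n. For m ≥ 1 define Ψ_m(a) = Σ (−1)^{k−1} · r_k · Z_{r_1}(Z_{r_2}(⋯ Z_{r_k}(a) ⋯)) for a ∈ P_n, the sum over all compositions (r_1,…,r_k) of m, and set (F_m)_j = −Ψ_m(x_j). Then the n-tuple of formal power series X + Σ_{m≥1} t^m F_m is the formal inverse of X + tF; concretely, for every N ≥ 1 and every j, the coefficient of t^N in the polynomial (in P_n[t]) obtained from x_j + Σ_{m=1}^{N} t^m (F_m)_j by substituting x_i ↦ x_i + t·f_i for all i is zero (and its coefficient of t^0 is x_j). -/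
/-!
Write `σ(a) = ∑ᵢ Zᵢ(a) tⁱ` for the substitution `xᵢ ↦ xᵢ + t fᵢ`. The coefficient of `t^N` in
`σ(x_j + ∑ₘ tᵐ Gₘ)` is `∑ₘ Z_{N-m}(Gₘ)`. With `B = ∑_{r ≥ 1} Z_r tʳ` and `D = ∑ r Z_r tʳ` as
operator-valued series, the sum over compositions is `∑ₘ Ψₘ tᵐ = (1 + B)⁻¹ D`, that is
`∑_{m=1}^N Z_{N-m} Ψₘ = N Z_N` (combinatorially: split off the first block of a composition).
So the coefficient of `t^N` is `(1 - N) Z_N(x_j)`, which vanishes since `Z₁(x_j) = f_j` and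
`Z_N(x_j) = 0` for `N ≥ 2`.
-/

open MvPolynomial

variable {k : Type*} [Field k] [CharZero k] {n : ℕ}

/-- Substitution `xᵢ ↦ xᵢ + t·fᵢ` applied to the coefficients of a polynomial in `t`
over `Pn k n` (with `t ↦ t`). -/
noncomputable def substT (F : Fin n → Pn k n) (p : Polynomial (Pn k n)) : Polynomial (Pn k n) :=
  Polynomial.eval₂
    (MvPolynomial.aeval
      (fun i => Polynomial.C (MvPolynomial.X i) + Polynomial.C (F i) * Polynomial.X :
        Fin n → Polynomial (Pn k n)) : Pn k n →ₐ[k] Polynomial (Pn k n)).toRingHom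
    Polynomial.X p

namespace Composition

theorem sum_tail_blocks_lt {M : ℕ} (c : Composition (M + 1)) : c.blocks.tail.sum < M + 1 := by
  obtain ⟨b, l, hc⟩ := List.exists_cons_of_ne_nil (mt c.blocks_eq_nil.1 M.succ_ne_zero)
  have hb := c.blocks_pos (hc ▸ List.mem_cons_self)
  have hsum := c.blocks_sum
  simp only [hc, List.tail_cons, List.sum_cons] at hsum ⊢
  omega

/-- Splitting off the first block: the index `m ≤ M` is the sum of the remaining blocks. -/
def equivSigmaTail (M : ℕ) : Composition (M + 1) ≃ Σ m : Fin (M + 1), Composition m where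
  toFun c := ⟨⟨c.blocks.tail.sum, c.sum_tail_blocks_lt⟩,
    ⟨c.blocks.tail, fun h => c.blocks_pos (List.mem_of_mem_tail h), rfl⟩⟩
  invFun p := ⟨(M + 1 - p.1) :: p.2.blocks,
    by
      rintro i (_ | ⟨_, hi⟩)
      · omega
      · exact p.2.blocks_pos hi,
    by simp only [List.sum_cons, p.2.blocks_sum]; omega⟩
  left_inv := by
    rintro ⟨_ | ⟨b, l⟩, hpos, hsum⟩
    · simp at hsum
    · ext1
      simp only [List.sum_cons] at hsum
      simp only [List.tail_cons, List.cons.injEq, and_true]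
      omega
  right_inv := by
    rintro ⟨⟨m, hm⟩, ⟨l, hl, hsum : l.sum = m⟩⟩
    subst hsum
    rfl

instance : Unique (Composition 0) where
  default := ones 0
  uniq c := Composition.ext <| by simp [blocks_eq_nil]

end Composition

section CompositionPsi

variable {A : Type*} [AddCommGroup A] (Z : ℕ → A →+ A)

def compositionTerm (l : List ℕ) (a : A) : A :=
  ((-1) ^ (l.length - 1) * (l.getLastD 0 : ℤ)) • l.foldr (fun r b => Z r b) a

/-- The `Ψₘ` of the statement, for any family of additive maps `Z r` in place of `Z_r`. -/
def compositionPsi (m : ℕ) (a : A) : A :=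
  ∑ c : Composition m, compositionTerm Z c.blocks a

theorem compositionTerm_singleton (r : ℕ) (a : A) :
    compositionTerm Z [r] a = (r : ℤ) • Z r a := by
  simp [compositionTerm]

theorem compositionTerm_cons {l : List ℕ} (hl : l ≠ []) (r : ℕ) (a : A) :
    compositionTerm Z (r :: l) a = -Z r (compositionTerm Z l a) := by
  obtain ⟨b, l, rfl⟩ := List.exists_cons_of_ne_nil hl
  simp [compositionTerm, pow_succ, map_zsmul, mul_smul]

theorem compositionPsi_succ (M : ℕ) (a : A) :
    compositionPsi Z (M + 1) a = ((M + 1 : ℕ) : ℤ) • Z (M + 1) a -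
      ∑ m ∈ Finset.Icc 1 M, Z (M + 1 - m) (compositionPsi Z m a) := by
  have split_first_block := Fintype.sum_equiv (Composition.equivSigmaTail M)
    (fun c => compositionTerm Z c.blocks a)
    (fun p => compositionTerm Z ((M + 1 - p.1) :: p.2.blocks) a)
    (fun c => congrArg (fun c' => compositionTerm Z c'.blocks a)
      ((Composition.equivSigmaTail M).symm_apply_apply c).symm)
  rw [compositionPsi, split_first_block, ← Finset.univ_sigma_univ, Finset.sum_sigma,
    Fin.sum_univ_succ]
  have one_block : ∑ d : Composition 0, compositionTerm Z ((M + 1 - 0) :: d.blocks) a =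
      ((M + 1 : ℕ) : ℤ) • Z (M + 1) a := by
    rw [Fintype.sum_unique]
    exact compositionTerm_singleton Z (M + 1) a
  have several_blocks (m : ℕ) :
      ∑ d : Composition (m + 1), compositionTerm Z ((M + 1 - (m + 1)) :: d.blocks) a =
        -Z (M + 1 - (m + 1)) (compositionPsi Z (m + 1) a) := by
    rw [compositionPsi, map_sum, ← Finset.sum_neg_distrib]
    exact Finset.sum_congr rfl fun d _ =>
      compositionTerm_cons Z (mt d.blocks_eq_nil.1 m.succ_ne_zero) _ a
  simp only [Fin.val_zero, Fin.val_succ, several_blocks]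
  rw [Fin.sum_univ_eq_sum_range (fun m => -Z (M + 1 - (m + 1)) (compositionPsi Z (m + 1) a)),
    Finset.range_eq_Ico, Finset.sum_Ico_add' (fun m => -Z (M + 1 - m) (compositionPsi Z m a)),
    zero_add, Finset.Ico_add_one_right_eq_Icc, Finset.sum_neg_distrib, sub_eq_add_neg]
  exact congrArg (· + _) one_block

theorem sum_Icc_map_compositionPsi (hZ : Z 0 = AddMonoidHom.id A) (N : ℕ) (a : A) :
    ∑ m ∈ Finset.Icc 1 N, Z (N - m) (compositionPsi Z m a) = (N : ℤ) • Z N a := by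
  rcases N with _ | M
  · simp
  · rw [Finset.sum_Icc_succ_top (by omega), Nat.sub_self, hZ, AddMonoidHom.id_apply,
      compositionPsi_succ]
    abel

end CompositionPsi

section Substitution

omit [CharZero k]

variable (F : Fin n → Pn k n)

noncomputable def zcHom (r : ℕ) : Pn k n →+ Pn k n :=
  AddMonoidHom.mk' (Zc F r) fun a b => by simp only [Zc, map_add, Polynomial.coeff_add]

theorem PsiOp_eq_compositionPsi (m : ℕ) (a : Pn k n) :
    PsiOp F m a = compositionPsi (zcHom F) m a := by
  refine Finset.sum_congr rfl fun c _ => ?_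
  rw [compositionTerm, zsmul_eq_mul, ← c.blocks_length]
  push_cast
  rfl

theorem Zc_zero (a : Pn k n) : Zc F 0 a = a := by
  rw [Zc, Polynomial.coeff_zero_eq_eval_zero]
  induction a using MvPolynomial.induction_on with
  | C c => simp [MvPolynomial.algebraMap_eq, Polynomial.algebraMap_apply]
  | add p q hp hq => simp [hp, hq]
  | mul_X p j hp => simp [hp]

theorem Zc_X_of_two_le {r : ℕ} (hr : 2 ≤ r) (j : Fin n) : Zc F r (X j) = 0 := by
  obtain ⟨r, rfl⟩ := Nat.exists_eq_add_of_le' hr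
  simp [Zc]

theorem sum_Icc_Zc_PsiOp (N : ℕ) (a : Pn k n) :
    ∑ m ∈ Finset.Icc 1 N, Zc F (N - m) (PsiOp F m a) = (N : ℤ) • Zc F N a := by
  simp only [PsiOp_eq_compositionPsi]
  exact sum_Icc_map_compositionPsi (zcHom F) (AddMonoidHom.ext (Zc_zero F)) N a

theorem coeff_substT_C_add_sum (a : Pn k n) (s : Finset ℕ) (g : ℕ → Pn k n) (d : ℕ) :
    (substT F (Polynomial.C a + ∑ m ∈ s, Polynomial.C (g m) * Polynomial.X ^ m)).coeff d =
      Zc F d a + ∑ m ∈ s, if m ≤ d then Zc F (d - m) (g m) else 0 := by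
  simp only [substT, Polynomial.eval₂_add, Polynomial.eval₂_C, Polynomial.eval₂_finsetSum,
    Polynomial.eval₂_mul, Polynomial.eval₂_X_pow, Polynomial.coeff_add,
    Polynomial.finsetSum_coeff, Polynomial.coeff_mul_X_pow']
  rfl

end Substitution

theorem formal_inverse_coeffs_general (F : Fin n → Pn k n) (N : ℕ) (hN : 1 ≤ N)
    (j : Fin n) :
    (substT F (Polynomial.C (MvPolynomial.X j) +
        ∑ m ∈ Finset.Icc 1 N,
          Polynomial.C (-(PsiOp F m (MvPolynomial.X j))) * Polynomial.X ^ m)).coeff N = 0 ∧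
    (substT F (Polynomial.C (MvPolynomial.X j) +
        ∑ m ∈ Finset.Icc 1 N,
          Polynomial.C (-(PsiOp F m (MvPolynomial.X j))) * Polynomial.X ^ m)).coeff 0 =
      MvPolynomial.X j := by
  rw [coeff_substT_C_add_sum, coeff_substT_C_add_sum, Zc_zero]
  constructor
  · have top_coeff : ∑ m ∈ Finset.Icc 1 N,
        (if m ≤ N then Zc F (N - m) (-PsiOp F m (X j)) else 0) = -((N : ℤ) • Zc F N (X j)) := by
      rw [← sum_Icc_Zc_PsiOp, ← Finset.sum_neg_distrib]
      refine Finset.sum_congr rfl fun m hm => ?_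
      rw [if_pos (Finset.mem_Icc.1 hm).2]
      exact map_neg (zcHom F (N - m)) _
    rw [top_coeff]
    rcases hN.eq_or_lt with rfl | hN
    · simp
    · simp [Zc_X_of_two_le F hN]
  · rw [Finset.sum_eq_zero fun m hm => if_neg (by grind), add_zero]

/-- with `(F_m)_j = −Ψ_m(x_j)`, the series `X + Σ t^m F_m` is the formal
inverse of `X + tF`: substituting `xᵢ ↦ xᵢ + t·fᵢ` into `x_j + Σ_{m=1}^N t^m (F_m)_j`
kills the coefficient of `t^N` (and the constant coefficient is `x_j`). -/
theorem formal_inverse_coeffs (hn : 1 ≤ n) (F : Fin n → Pn k n) (N : ℕ) (hN : 1 ≤ N)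
    (j : Fin n) :
    (substT F (Polynomial.C (MvPolynomial.X j) +
        ∑ m ∈ Finset.Icc 1 N,
          Polynomial.C (-(PsiOp F m (MvPolynomial.X j))) * Polynomial.X ^ m)).coeff N = 0 ∧
    (substT F (Polynomial.C (MvPolynomial.X j) +
        ∑ m ∈ Finset.Icc 1 N,
          Polynomial.C (-(PsiOp F m (MvPolynomial.X j))) * Polynomial.X ^ m)).coeff 0 =
      MvPolynomial.X j :=
  formal_inverse_coeffs_general F N hN j
end
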